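/- Let A be a finite-dimensional semisimple unital associative algebra over an algebraically closed field of characteristic p with p ≠ 2 and p ≠ 3, and let k ≥ 0. Then every Jordan-Lie inner ideal B of L = A^(k) is regular, i.e. BAB ⊆ B. -/
import Mathlib


namespace Paper

variable (F A : Type*) [Field F] [Ring A] [Algebra F A]

/-- The derived series `A⁽ᵏ⁾` of the Lie algebra `A⁽⁻⁾` (as subspaces of `A`). -/
def derivedSeries : ℕ → Submodule F A
  | 0 => ⊤
  | (k+1) => Submodule.span F
      {z : A | ∃ x ∈ derivedSeries k, ∃ y ∈ derivedSeries k, z = ⁅x, y⁆}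

variable {F A}

/-- `B` is an inner ideal of the Lie algebra given by the subspace `L` of `A⁽⁻⁾`. -/
def IsInnerIdeal (L B : Submodule F A) : Prop :=
  B ≤ L ∧ ∀ b ∈ B, ∀ b' ∈ B, ∀ x ∈ L, ⁅b, ⁅b', x⁆⁆ ∈ B

/-- `B` is a Jordan-Lie inner ideal of `L`. -/
def IsJordanLie (L B : Submodule F A) : Prop :=
  IsInnerIdeal L B ∧ ∀ b ∈ B, ∀ b' ∈ B, b * b' = 0

/-- Jacobson radical of `A` as an `F`-subspace. -/
noncomputable def radical : Submodule F A :=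
  (Ideal.jacobson (⊥ : Ideal A)).restrictScalars F

/-- The Jacobson radical of a subalgebra `A'`, as a subset of `A`. -/
def subalgRad (A' : Subalgebra F A) : Set A :=
  Subtype.val '' ((Ideal.jacobson (⊥ : Ideal A')) : Set A')

/-- `c` represents a central idempotent of the quotient of the
(sub)algebra with carrier `S` by the ideal with carrier `ρ`. -/
def IsCentralIdempotentMod (S ρ : Set A) (c : A) : Prop :=
  c ∈ S ∧ (∀ a ∈ S, c * a - a * c ∈ ρ) ∧ c * c - c ∈ ρ

/-- `c` represents a primitive central idempotent of the quotient mod `ρ`. -/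
def IsPrimitiveCentralIdempotentMod (S ρ : Set A) (c : A) : Prop :=
  IsCentralIdempotentMod S ρ c ∧ c ∉ ρ ∧
    ¬ ∃ c₁ c₂ : A, IsCentralIdempotentMod S ρ c₁ ∧ IsCentralIdempotentMod S ρ c₂ ∧
      c₁ ∉ ρ ∧ c₂ ∉ ρ ∧ c₁ * c₂ ∈ ρ ∧ c₂ * c₁ ∈ ρ ∧ c - (c₁ + c₂) ∈ ρ

/-- The idempotent pair `(e, f)` is strict w.r.t. the quotient mod `ρ`:
for every primitive central idempotent `c` of the quotient, `c·ē = 0 ↔ c·f̄ = 0`. -/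
def IsStrictPairMod (S ρ : Set A) (e f : A) : Prop :=
  ∀ c : A, IsPrimitiveCentralIdempotentMod S ρ c → (c * e ∈ ρ ↔ c * f ∈ ρ)

/-- `(e,f)` is a strict idempotent pair of `A` (strictness w.r.t. `A/rad A`). -/
def IsStrictPair (e f : A) : Prop :=
  e * e = e ∧ f * f = f ∧
    IsStrictPairMod Set.univ ((Ideal.jacobson (⊥ : Ideal A)) : Set A) e f

/-- `J` is a two-sided ideal of the (possibly non-unital) algebra `P`. -/
def IsTwoSidedIdealIn (P J : Submodule F A) : Prop :=
  J ≤ P ∧ ∀ p ∈ P, ∀ x ∈ J, p * x ∈ J ∧ x * p ∈ J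

/-- The algebra with carrier `P` is 1-perfect: it has no two-sided ideals of
codimension 1. -/
def IsOnePerfect (P : Submodule F A) : Prop :=
  ¬ ∃ J : Submodule F A, IsTwoSidedIdealIn P J ∧
      Module.finrank F P = Module.finrank F J + 1

open Module


variable (F) in
/-- The right ideal `yA` as an `F`-submodule. -/
noncomputable def rA (y : A) : Submodule F A := LinearMap.range (LinearMap.mulLeft F y)

variable (F) in
/-- The left ideal `Ay` as an `F`-submodule. -/
noncomputable def lA (y : A) : Submodule F A := LinearMap.range (LinearMap.mulRight F y)

variable (F) in
/-- The subspace `bAb`. -/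
noncomputable def sandw (b : A) : Submodule F A :=
  LinearMap.range ((LinearMap.mulRight F b).comp (LinearMap.mulLeft F b))

lemma mem_rA {y x : A} : x ∈ rA F y ↔ ∃ a, y * a = x := by
  simp [rA, LinearMap.mem_range]

lemma mem_lA {y x : A} : x ∈ lA F y ↔ ∃ a, a * y = x := by
  simp [lA, LinearMap.mem_range]

lemma mem_sandw {b x : A} : x ∈ sandw F b ↔ ∃ c, b * c * b = x := by
  simp [sandw, LinearMap.mem_range]

lemma self_mem_rA (y : A) : y ∈ rA F y := mem_rA.2 ⟨1, mul_one y⟩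

lemma self_mem_lA (y : A) : y ∈ lA F y := mem_lA.2 ⟨1, one_mul y⟩

/-- `I` is a right ideal. -/
def IsRId (I : Submodule F A) : Prop := ∀ x ∈ I, ∀ a : A, x * a ∈ I

/-- `I` is a left ideal. -/
def IsLId (I : Submodule F A) : Prop := ∀ x ∈ I, ∀ a : A, a * x ∈ I

lemma rA_isRId (y : A) : IsRId (rA F y) := by
  intro x hx a
  obtain ⟨c, rfl⟩ := mem_rA.1 hx
  exact mem_rA.2 ⟨c * a, by rw [mul_assoc]⟩

lemma lA_isLId (y : A) : IsLId (lA F y) := by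
  intro x hx a
  obtain ⟨c, rfl⟩ := mem_lA.1 hx
  exact mem_lA.2 ⟨a * c, by rw [mul_assoc]⟩

lemma rA_le_of_mem {t x : A} (hx : x ∈ rA F t) : rA F x ≤ rA F t := by
  intro w hw
  obtain ⟨a, rfl⟩ := mem_rA.1 hw
  exact rA_isRId t x hx a

lemma lA_le_of_mem {t x : A} (hx : x ∈ lA F t) : lA F x ≤ lA F t := by
  intro w hw
  obtain ⟨a, rfl⟩ := mem_lA.1 hw
  exact lA_isLId t x hx a

lemma rA_eq_bot_iff {y : A} : rA F y = ⊥ ↔ y = 0 := by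
  constructor
  · intro h
    have := self_mem_rA (F := F) y
    rw [h] at this
    simpa using this
  · rintro rfl
    rw [eq_bot_iff]
    intro x hx
    obtain ⟨a, rfl⟩ := mem_rA.1 hx
    simp

/-- Semiprimeness from triviality of the Jacobson radical. -/
lemma semiprime_of_jacobson (hss : Ideal.jacobson (⊥ : Ideal A) = ⊥)
    (x : A) (h : ∀ a : A, x * a * x = 0) : x = 0 := by
  have hx : x ∈ Ideal.jacobson (⊥ : Ideal A) := by
    rw [Ideal.jacobson]
    refine Submodule.mem_sInf.2 ?_
    rintro J ⟨-, hJ⟩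
    by_contra hxJ
    have hlt : J < J ⊔ Ideal.span {x} := by
      refine lt_of_le_of_ne le_sup_left ?_
      intro hEq
      exact hxJ (hEq ▸ (le_sup_right : Ideal.span {x} ≤ _) (Ideal.subset_span rfl))
    have hKtop : J ⊔ Ideal.span {x} = ⊤ := hJ.out.2 _ hlt
    have h1 : (1 : A) ∈ J ⊔ Ideal.span {x} := by rw [hKtop]; trivial
    obtain ⟨m, hm, t, ht, hmt⟩ := Submodule.mem_sup.1 h1
    obtain ⟨a, hat⟩ := Submodule.mem_span_singleton.1 ht
    rw [smul_eq_mul] at hat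
    have hm' : m = 1 - a * x := by
      rw [← hmt, ← hat, add_sub_cancel_right]
    have hkey : (1 + a * x) * m = 1 := by
      rw [hm']
      have : (1 + a * x) * (1 - a * x) = 1 - a * (x * a * x) := by noncomm_ring
      rw [this, h, mul_zero, sub_zero]
    have : (1 : A) ∈ J := by
      have := J.smul_mem (1 + a * x) hm
      rwa [smul_eq_mul, hkey] at this
    exact hJ.ne_top ((Ideal.eq_top_iff_one J).2 this)
  rw [hss] at hx
  simpa using hx

/-- gluing two idempotents. -/
lemma idem_glue {e g' : A} (he : e * e = e) (hg : g' * g' = g') (heg : e * g' = 0) :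
    (e + g' - g' * e) * (e + g' - g' * e) = e + g' - g' * e := by
  have h1 : (e + g' - g' * e) * e = e := by
    rw [sub_mul, add_mul, he, mul_assoc, he]
    abel
  have h2 : (e + g' - g' * e) * g' = g' := by
    rw [sub_mul, add_mul, heg, hg, mul_assoc, heg, mul_zero]
    abel
  have h3 : (e + g' - g' * e) * (g' * e) = g' * e := by
    rw [← mul_assoc, h2]
  rw [mul_sub, mul_add, h1, h2, h3]

/-- Every right ideal of a finite-dimensional semiprime algebra is generated by
an idempotent acting as a left unit on it. -/
lemma exists_idem_right [FiniteDimensional F A]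
    (hsp : ∀ x : A, (∀ a : A, x * a * x = 0) → x = 0) :
    ∀ (n : ℕ) (I : Submodule F A), IsRId I → Module.finrank F I ≤ n →
      ∃ g ∈ I, g * g = g ∧ ∀ x ∈ I, g * x = x := by
  intro n
  induction n with
  | zero =>
    intro I _ hrk
    have hI : I = ⊥ := Submodule.finrank_eq_zero.1 (Nat.le_zero.1 hrk)
    refine ⟨0, I.zero_mem, by simp, ?_⟩
    intro x hx
    rw [hI] at hx
    simp_all
  | succ n ih =>
    intro I hIr hrk
    by_cases hIbot : I = ⊥
    · refine ⟨0, I.zero_mem, by simp, ?_⟩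
      intro x hx
      rw [hIbot] at hx
      simp_all
    · -- minimal nonzero right subideal
      set S : Set ℕ :=
        {d | ∃ J : Submodule F A, J ≤ I ∧ IsRId J ∧ J ≠ ⊥ ∧ Module.finrank F J = d} with hS
      have hSne : S.Nonempty := ⟨_, I, le_rfl, hIr, hIbot, rfl⟩
      obtain ⟨I₀, hI₀I, hI₀r, hI₀ne, hI₀rk⟩ := Nat.sInf_mem hSne
      have hmin : ∀ J : Submodule F A, J ≤ I₀ → IsRId J → J ≠ ⊥ → J = I₀ := by
        intro J hle hJr hJne
        have hd : sInf S ≤ Module.finrank F J :=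
          Nat.sInf_le ⟨J, hle.trans hI₀I, hJr, hJne, rfl⟩
        exact Submodule.eq_of_le_of_finrank_le hle (hI₀rk ▸ hd)
      -- Brauer's lemma: I₀ contains a nonzero idempotent
      have hxt : ∃ x ∈ I₀, ∃ t ∈ I₀, x * t ≠ 0 := by
        by_contra h'
        push_neg at h'
        obtain ⟨x, hxI₀, hx0⟩ := Submodule.exists_mem_ne_zero_of_ne_bot hI₀ne
        refine hx0 (hsp x ?_)
        intro a
        exact h' (x * a) (hI₀r x hxI₀ a) x hxI₀
      obtain ⟨x, hxI₀, t, htI₀, hxt0⟩ := hxt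
      have hx0 : x ≠ 0 := by rintro rfl; simp at hxt0
      -- xI₀ = I₀
      have hxI₀eq : Submodule.map (LinearMap.mulLeft F x) I₀ = I₀ := by
        refine hmin _ ?_ ?_ ?_
        · rintro _ ⟨c, hc, rfl⟩
          exact hI₀r x hxI₀ c
        · rintro _ ⟨c, hc, rfl⟩ a
          exact ⟨c * a, hI₀r c hc a, by simp [mul_assoc]⟩
        · intro hbot
          refine hxt0 ?_
          have : x * t ∈ Submodule.map (LinearMap.mulLeft F x) I₀ := ⟨t, htI₀, rfl⟩
          rw [hbot] at this
          simpa using this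
      obtain ⟨e, heI₀, hexe⟩ : ∃ e ∈ I₀, x * e = x := by
        have hx' : x ∈ Submodule.map (LinearMap.mulLeft F x) I₀ := by
          rw [hxI₀eq]; exact hxI₀
        obtain ⟨e, he, heq⟩ := hx'
        exact ⟨e, he, heq⟩
      -- kernel ideal is zero
      have hker : I₀ ⊓ LinearMap.ker (LinearMap.mulLeft F x) = ⊥ := by
        by_contra hne
        have heq := hmin _ inf_le_left
          (by
            rintro y ⟨hy1, hy2⟩ a
            refine ⟨hI₀r y hy1 a, ?_⟩
            have hy2' : x * y = 0 := hy2
            show x * (y * a) = 0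
            rw [← mul_assoc, hy2', zero_mul]) hne
        have ht' : t ∈ I₀ ⊓ LinearMap.ker (LinearMap.mulLeft F x) := by
          rw [heq]; exact htI₀
        have := (Submodule.mem_inf.1 ht').2
        simp only [LinearMap.mem_ker, LinearMap.mulLeft_apply] at this
        exact hxt0 this
      have hee : e * e = e := by
        have hmem : e * e - e ∈ I₀ ⊓ LinearMap.ker (LinearMap.mulLeft F x) := by
          refine ⟨sub_mem (hI₀r e heI₀ e) heI₀, ?_⟩
          show x * (e * e - e) = 0
          rw [mul_sub, ← mul_assoc, hexe, hexe, sub_self]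
        rw [hker] at hmem
        simpa [sub_eq_zero] using hmem
      have he0 : e ≠ 0 := by
        rintro rfl
        rw [mul_zero] at hexe
        exact hx0 hexe.symm
      have heI : e ∈ I := hI₀I heI₀
      -- pass to the complement
      set I' : Submodule F A := I ⊓ LinearMap.ker (LinearMap.mulLeft F e) with hI'def
      have hI'r : IsRId I' := by
        rintro y ⟨hy1, hy2⟩ a
        refine ⟨hIr y hy1 a, ?_⟩
        have hy2' : e * y = 0 := hy2
        show e * (y * a) = 0
        rw [← mul_assoc, hy2', zero_mul]
      have hI'lt : I' < I := by
        refine lt_of_le_of_ne inf_le_left ?_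
        intro hEq
        have he' : e ∈ I' := by rw [hEq]; exact heI
        have := (Submodule.mem_inf.1 he').2
        simp only [LinearMap.mem_ker, LinearMap.mulLeft_apply] at this
        rw [hee] at this
        exact he0 this
      have hrk' : Module.finrank F I' ≤ n := by
        have := Submodule.finrank_lt_finrank_of_lt hI'lt
        omega
      obtain ⟨g', hg'I', hg'g', hg'unit⟩ := ih I' hI'r hrk'
      have heg' : e * g' = 0 := by
        have := (Submodule.mem_inf.1 hg'I').2
        simpa only [LinearMap.mem_ker, LinearMap.mulLeft_apply] using this
      refine ⟨e + g' - g' * e, ?_, idem_glue hee hg'g' heg', ?_⟩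
      · exact sub_mem (add_mem heI hg'I'.1) (hIr g' hg'I'.1 e)
      · intro y hy
        have hyI' : y - e * y ∈ I' := by
          refine ⟨sub_mem hy (hIr e heI y), ?_⟩
          show e * (y - e * y) = 0
          rw [mul_sub, ← mul_assoc, hee, sub_self]
        have hgy : g' * (y - e * y) = y - e * y := hg'unit _ hyI'
        have expand : (e + g' - g' * e) * y = e * y + (g' * y - g' * (e * y)) := by
          rw [sub_mul, add_mul, mul_assoc]
          abel
        rw [expand, ← mul_sub, hgy]
        abel

lemma idem_glue_left {e g' : A} (he : e * e = e) (hg : g' * g' = g') (heg : g' * e = 0) :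
    (e + g' - e * g') * (e + g' - e * g') = e + g' - e * g' := by
  have h1 : e * (e + g' - e * g') = e := by
    rw [mul_sub, mul_add, he, ← mul_assoc, he]
    abel
  have h2 : g' * (e + g' - e * g') = g' := by
    rw [mul_sub, mul_add, heg, hg, ← mul_assoc, heg, zero_mul]
    abel
  have h3 : (e * g') * (e + g' - e * g') = e * g' := by
    rw [mul_assoc, h2]
  rw [sub_mul, add_mul, h1, h2, h3]

/-- Left-sided version of `exists_idem_right`. -/
lemma exists_idem_left [FiniteDimensional F A]
    (hsp : ∀ x : A, (∀ a : A, x * a * x = 0) → x = 0) :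
    ∀ (n : ℕ) (I : Submodule F A), IsLId I → Module.finrank F I ≤ n →
      ∃ g ∈ I, g * g = g ∧ ∀ x ∈ I, x * g = x := by
  intro n
  induction n with
  | zero =>
    intro I _ hrk
    have hI : I = ⊥ := Submodule.finrank_eq_zero.1 (Nat.le_zero.1 hrk)
    refine ⟨0, I.zero_mem, by simp, ?_⟩
    intro x hx
    rw [hI] at hx
    simp_all
  | succ n ih =>
    intro I hIr hrk
    by_cases hIbot : I = ⊥
    · refine ⟨0, I.zero_mem, by simp, ?_⟩
      intro x hx
      rw [hIbot] at hx
      simp_all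
    · set S : Set ℕ :=
        {d | ∃ J : Submodule F A, J ≤ I ∧ IsLId J ∧ J ≠ ⊥ ∧ Module.finrank F J = d} with hS
      have hSne : S.Nonempty := ⟨_, I, le_rfl, hIr, hIbot, rfl⟩
      obtain ⟨I₀, hI₀I, hI₀r, hI₀ne, hI₀rk⟩ := Nat.sInf_mem hSne
      have hmin : ∀ J : Submodule F A, J ≤ I₀ → IsLId J → J ≠ ⊥ → J = I₀ := by
        intro J hle hJr hJne
        have hd : sInf S ≤ Module.finrank F J :=
          Nat.sInf_le ⟨J, hle.trans hI₀I, hJr, hJne, rfl⟩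
        exact Submodule.eq_of_le_of_finrank_le hle (hI₀rk ▸ hd)
      have hxt : ∃ x ∈ I₀, ∃ t ∈ I₀, t * x ≠ 0 := by
        by_contra h'
        push_neg at h'
        obtain ⟨x, hxI₀, hx0⟩ := Submodule.exists_mem_ne_zero_of_ne_bot hI₀ne
        refine hx0 (hsp x ?_)
        intro a
        rw [mul_assoc]
        exact h' (a * x) (hI₀r x hxI₀ a) x hxI₀
      obtain ⟨x, hxI₀, t, htI₀, hxt0⟩ := hxt
      have hx0 : x ≠ 0 := by rintro rfl; simp at hxt0
      have hxI₀eq : Submodule.map (LinearMap.mulRight F x) I₀ = I₀ := by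
        refine hmin _ ?_ ?_ ?_
        · rintro _ ⟨c, hc, rfl⟩
          exact hI₀r x hxI₀ c
        · rintro _ ⟨c, hc, rfl⟩ a
          exact ⟨a * c, hI₀r c hc a, by simp [mul_assoc]⟩
        · intro hbot
          refine hxt0 ?_
          have : t * x ∈ Submodule.map (LinearMap.mulRight F x) I₀ := ⟨t, htI₀, rfl⟩
          rw [hbot] at this
          simpa using this
      obtain ⟨e, heI₀, hexe⟩ : ∃ e ∈ I₀, e * x = x := by
        have hx' : x ∈ Submodule.map (LinearMap.mulRight F x) I₀ := by
          rw [hxI₀eq]; exact hxI₀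
        obtain ⟨e, he, heq⟩ := hx'
        exact ⟨e, he, heq⟩
      have hker : I₀ ⊓ LinearMap.ker (LinearMap.mulRight F x) = ⊥ := by
        by_contra hne
        have heq := hmin _ inf_le_left
          (by
            rintro y ⟨hy1, hy2⟩ a
            refine ⟨hI₀r y hy1 a, ?_⟩
            have hy2' : y * x = 0 := hy2
            show (a * y) * x = 0
            rw [mul_assoc, hy2', mul_zero]) hne
        have ht' : t ∈ I₀ ⊓ LinearMap.ker (LinearMap.mulRight F x) := by
          rw [heq]; exact htI₀
        have := (Submodule.mem_inf.1 ht').2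
        simp only [LinearMap.mem_ker, LinearMap.mulRight_apply] at this
        exact hxt0 this
      have hee : e * e = e := by
        have hmem : e * e - e ∈ I₀ ⊓ LinearMap.ker (LinearMap.mulRight F x) := by
          refine ⟨sub_mem (hI₀r e heI₀ e) heI₀, ?_⟩
          show (e * e - e) * x = 0
          rw [sub_mul, mul_assoc, hexe, hexe, sub_self]
        rw [hker] at hmem
        simpa [sub_eq_zero] using hmem
      have he0 : e ≠ 0 := by
        rintro rfl
        rw [zero_mul] at hexe
        exact hx0 hexe.symm
      have heI : e ∈ I := hI₀I heI₀
      set I' : Submodule F A := I ⊓ LinearMap.ker (LinearMap.mulRight F e) with hI'def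
      have hI'r : IsLId I' := by
        rintro y ⟨hy1, hy2⟩ a
        refine ⟨hIr y hy1 a, ?_⟩
        have hy2' : y * e = 0 := hy2
        show (a * y) * e = 0
        rw [mul_assoc, hy2', mul_zero]
      have hI'lt : I' < I := by
        refine lt_of_le_of_ne inf_le_left ?_
        intro hEq
        have he' : e ∈ I' := by rw [hEq]; exact heI
        have := (Submodule.mem_inf.1 he').2
        simp only [LinearMap.mem_ker, LinearMap.mulRight_apply] at this
        rw [hee] at this
        exact he0 this
      have hrk' : Module.finrank F I' ≤ n := by
        have := Submodule.finrank_lt_finrank_of_lt hI'lt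
        omega
      obtain ⟨g', hg'I', hg'g', hg'unit⟩ := ih I' hI'r hrk'
      have heg' : g' * e = 0 := by
        have := (Submodule.mem_inf.1 hg'I').2
        simpa only [LinearMap.mem_ker, LinearMap.mulRight_apply] using this
      refine ⟨e + g' - e * g', ?_, idem_glue_left hee hg'g' heg', ?_⟩
      · have hg'I : g' ∈ I := (Submodule.mem_inf.1 hg'I').1
        exact sub_mem (add_mem heI hg'I) (hIr g' hg'I e)
      · intro y hy
        have hyI' : y - y * e ∈ I' := by
          refine ⟨sub_mem hy (hIr e heI y), ?_⟩
          show (y - y * e) * e = 0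
          rw [sub_mul, mul_assoc, hee, sub_self]
        have hgy : (y - y * e) * g' = y - y * e := hg'unit _ hyI'
        have expand : y * (e + g' - e * g') = y * e + (y * g' - (y * e) * g') := by
          rw [mul_sub, mul_add, ← mul_assoc]
          abel
        rw [expand, ← sub_mul, hgy]
        abel

/-- Von Neumann regularity. -/
lemma exists_vn [FiniteDimensional F A]
    (hsp : ∀ x : A, (∀ a : A, x * a * x = 0) → x = 0) (y : A) :
    ∃ a : A, y * a * y = y := by
  obtain ⟨g, hgI, hgg, hgunit⟩ :=
    exists_idem_right hsp (Module.finrank F (rA F y)) (rA F y) (rA_isRId y) le_rfl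
  obtain ⟨a, ha⟩ := mem_rA.1 hgI
  exact ⟨a, by rw [ha]; exact hgunit y (self_mem_rA y)⟩

variable (F) in
/-- `u` generates a minimal right ideal. -/
def RankOne (u : A) : Prop := u ≠ 0 ∧ ∀ t ∈ rA F u, t ≠ 0 → rA F u ≤ rA F t

/-- Schur-type lemma: for an idempotent `g` generating a minimal right ideal,
`g * x * g` is always a scalar multiple of `g`. -/
lemma corner_scalar [FiniteDimensional F A] [IsAlgClosed F]
    {u g : A} (hgg : g * g = g) (hgmem : g ∈ rA F u)
    (hunit : ∀ x ∈ rA F u, g * x = x) (hu0 : u ≠ 0)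
    (hmin : ∀ t ∈ rA F u, t ≠ 0 → rA F u ≤ rA F t) (x : A) :
    ∃ lam : F, g * x * g = lam • g := by
  haveI : Nontrivial (rA F u) :=
    ⟨⟨u, self_mem_rA u⟩, 0, fun h => hu0 (by simpa using congrArg Subtype.val h)⟩
  have hstab : ∀ v ∈ rA F u, (g * x * g) * v ∈ rA F u := by
    intro v hv
    have h : (g * x * g) * v = g * (x * g * v) := by simp [mul_assoc]
    rw [h]
    exact rA_isRId u g hgmem _
  set T : Module.End F (rA F u) :=
    LinearMap.restrict (LinearMap.mulLeft F (g * x * g)) hstab with hT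
  obtain ⟨lam, hlam⟩ := Module.End.exists_eigenvalue T
  obtain ⟨v, hv⟩ := hlam.exists_hasEigenvector
  have hveq : (g * x * g) * (v : A) = lam • (v : A) := by
    have h1 := Module.End.mem_eigenspace_iff.1 hv.1
    have h2 := congrArg Subtype.val h1
    simpa [hT, LinearMap.restrict_apply, mul_assoc] using h2
  have hv0 : (v : A) ≠ 0 := fun h => hv.2 (Subtype.ext (by simpa using h))
  set w : A := g * x * g - lam • g with hw
  have hwv : w * (v : A) = 0 := by
    have hgv : g * (v : A) = (v : A) := hunit _ v.2
    rw [hw, sub_mul, hveq, smul_mul_assoc, hgv, sub_self]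
  have hrbot : (rA F u) ⊓ LinearMap.ker (LinearMap.mulLeft F w) ≠ ⊥ := by
    intro hbot
    have hmem : (v : A) ∈ (rA F u) ⊓ LinearMap.ker (LinearMap.mulLeft F w) := ⟨v.2, hwv⟩
    rw [hbot] at hmem
    exact hv0 (by simpa using hmem)
  obtain ⟨t₀, ht₀, ht₀0⟩ := Submodule.exists_mem_ne_zero_of_ne_bot hrbot
  have hker_t0 : w * t₀ = 0 := (Submodule.mem_inf.1 ht₀).2
  have hle : rA F u ≤ LinearMap.ker (LinearMap.mulLeft F w) := by
    have h1 : rA F u ≤ rA F t₀ := hmin t₀ (Submodule.mem_inf.1 ht₀).1 ht₀0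
    intro z hz
    obtain ⟨c, rfl⟩ := mem_rA.1 (h1 hz)
    show w * (t₀ * c) = 0
    rw [← mul_assoc, hker_t0, zero_mul]
  have hwg : w * g = 0 := hle hgmem
  refine ⟨lam, ?_⟩
  have hfin : (g * x * g - lam • g) * g = 0 := hwg
  rw [sub_mul, smul_mul_assoc, mul_assoc, hgg] at hfin
  rw [← sub_eq_zero]
  exact hfin

/-- A generator of a minimal right ideal also generates a minimal left ideal. -/
lemma left_min_of_right_min [FiniteDimensional F A] [IsAlgClosed F]
    (hsp : ∀ x : A, (∀ a : A, x * a * x = 0) → x = 0)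
    {u : A} (hu0 : u ≠ 0)
    (hmin : ∀ t ∈ rA F u, t ≠ 0 → rA F u ≤ rA F t) :
    ∀ t ∈ lA F u, t ≠ 0 → lA F u ≤ lA F t := by
  obtain ⟨g, hgmem, hgg, hunit⟩ :=
    exists_idem_right hsp (Module.finrank F (rA F u)) (rA F u) (rA_isRId u) le_rfl
  have hgu : g * u = u := hunit u (self_mem_rA u)
  intro t ht ht0
  obtain ⟨a, rfl⟩ := mem_lA.1 ht
  have hag : a * g ≠ 0 := by
    intro h
    refine ht0 ?_
    rw [← hgu, ← mul_assoc, h, zero_mul]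
  obtain ⟨x, hx⟩ : ∃ x : A, (a * g) * x * (a * g) ≠ 0 := by
    by_contra h'
    push_neg at h'
    exact hag (hsp _ h')
  obtain ⟨lam, hlam⟩ := corner_scalar hgg hgmem hunit hu0 hmin (x * a)
  have hlam0 : lam ≠ 0 := by
    intro h
    rw [h, zero_smul] at hlam
    refine hx ?_
    calc (a * g) * x * (a * g) = a * (g * (x * a) * g) := by simp [mul_assoc]
    _ = 0 := by rw [hlam, mul_zero]
  have hu_mem : u ∈ lA F (a * u) := by
    refine mem_lA.2 ⟨lam⁻¹ • (g * x), ?_⟩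
    have key : (g * (x * a) * g) * u = (g * x) * (a * u) := by
      calc (g * (x * a) * g) * u = g * (x * (a * (g * u))) := by simp [mul_assoc]
      _ = (g * x) * (a * u) := by rw [hgu]; simp [mul_assoc]
    calc (lam⁻¹ • (g * x)) * (a * u) = lam⁻¹ • ((g * x) * (a * u)) := smul_mul_assoc _ _ _
    _ = lam⁻¹ • ((g * (x * a) * g) * u) := by rw [key]
    _ = lam⁻¹ • ((lam • g) * u) := by rw [hlam]
    _ = (lam⁻¹ * lam) • (g * u) := by rw [smul_mul_assoc, smul_smul]
    _ = u := by rw [inv_mul_cancel₀ hlam0, one_smul, hgu]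
  exact lA_le_of_mem hu_mem

lemma sandw_mul_mem {b v w : A} (hv : v ∈ sandw F b) (hw : w ∈ sandw F b) (z : A) :
    v * z * w ∈ sandw F b := by
  obtain ⟨c₁, rfl⟩ := mem_sandw.1 hv
  obtain ⟨c₂, rfl⟩ := mem_sandw.1 hw
  exact mem_sandw.2 ⟨c₁ * (b * (z * (b * c₂))), by simp [mul_assoc]⟩

lemma sandw_le_rA {b v : A} (hv : v ∈ sandw F b) : rA F v ≤ rA F b := by
  obtain ⟨c, rfl⟩ := mem_sandw.1 hv
  intro z hz
  obtain ⟨a, rfl⟩ := mem_rA.1 hz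
  exact mem_rA.2 ⟨c * (b * a), by simp [mul_assoc]⟩

/-- Every nonzero `b` admits a rank-one element in `bAb`. -/
lemma exists_rankone [FiniteDimensional F A]
    (hsp : ∀ x : A, (∀ a : A, x * a * x = 0) → x = 0)
    {b : A} (hb0 : b ≠ 0) :
    ∃ v, RankOne F v ∧ v ∈ sandw F b := by
  have hbS : b ∈ sandw F b := by
    obtain ⟨a, ha⟩ := exists_vn (F := F) hsp b
    exact mem_sandw.2 ⟨a, ha⟩
  set S : Set ℕ :=
    {n | ∃ v, (v ∈ sandw F b ∧ v ≠ 0) ∧ Module.finrank F (rA F v) = n} with hSdef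
  have hSne : S.Nonempty := ⟨_, b, ⟨hbS, hb0⟩, rfl⟩
  obtain ⟨v, ⟨hvS, hv0⟩, hvrk⟩ := Nat.sInf_mem hSne
  refine ⟨v, ⟨hv0, ?_⟩, hvS⟩
  intro t ht ht0
  obtain ⟨c, rfl⟩ := mem_rA.1 ht
  obtain ⟨a', ha'⟩ := exists_vn (F := F) hsp (v * c)
  have htav : (v * c) * (a' * v) ≠ 0 := by
    intro h
    refine ht0 ?_
    calc v * c = v * c * a' * (v * c) := ha'.symm
    _ = ((v * c) * (a' * v)) * c := by simp [mul_assoc]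
    _ = 0 := by rw [h, zero_mul]
  set v' : A := (v * c) * (a' * v) with hv'def
  have hv'S : v' ∈ sandw F b := by
    have : v' = v * (c * a') * v := by simp [hv'def, mul_assoc]
    rw [this]
    exact sandw_mul_mem hvS hvS _
  have hv'rA : v' ∈ rA F (v * c) := mem_rA.2 ⟨a' * v, rfl⟩
  have hrk1 : sInf S ≤ Module.finrank F (rA F v') :=
    Nat.sInf_le ⟨v', ⟨hv'S, htav⟩, rfl⟩
  have hle1 : rA F v' ≤ rA F (v * c) := rA_le_of_mem hv'rA
  have hle2 : rA F (v * c) ≤ rA F v := rA_le_of_mem (mem_rA.2 ⟨c, rfl⟩)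
  have heq : rA F (v * c) = rA F v := by
    refine Submodule.eq_of_le_of_finrank_le hle2 ?_
    rw [hvrk]
    calc sInf S ≤ Module.finrank F (rA F v') := hrk1
    _ ≤ Module.finrank F (rA F (v * c)) := Submodule.finrank_mono hle1
  rw [← heq]

lemma isLId_sup {I J : Submodule F A} (hI : IsLId I) (hJ : IsLId J) : IsLId (I ⊔ J) := by
  intro x hx a
  obtain ⟨y, hy, z, hz, rfl⟩ := Submodule.mem_sup.1 hx
  rw [mul_add]
  exact Submodule.add_mem _ (Submodule.mem_sup_left (hI y hy a))
    (Submodule.mem_sup_right (hJ z hz a))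

lemma isRId_sup {I J : Submodule F A} (hI : IsRId I) (hJ : IsRId J) : IsRId (I ⊔ J) := by
  intro x hx a
  obtain ⟨y, hy, z, hz, rfl⟩ := Submodule.mem_sup.1 hx
  rw [add_mul]
  exact Submodule.add_mem _ (Submodule.mem_sup_left (hI y hy a))
    (Submodule.mem_sup_right (hJ z hz a))

/-- Core recombination lemma: products through rank-one elements of `B` stay in `B`. -/
lemma rankone_sandwich [FiniteDimensional F A] [IsAlgClosed F]
    (hsp : ∀ x : A, (∀ a : A, x * a * x = 0) → x = 0)
    (h2 : (2 : F) ≠ 0)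
    {B : Submodule F A}
    (hSig : ∀ b ∈ B, ∀ b' ∈ B, ∀ x : A, b * x * b' + b' * x * b ∈ B)
    {u v : A} (hu : RankOne F u) (hv : RankOne F v)
    (huB : u ∈ B) (hvB : v ∈ B) (x : A) : u * x * v ∈ B := by
  have hq : ∀ b ∈ B, ∀ z : A, b * z * b ∈ B := by
    intro b hb z
    have hs := hSig b hb b hb z
    have h22 : b * z * b = (2 : F)⁻¹ • (b * z * b + b * z * b) := by
      rw [← two_smul F, smul_smul, inv_mul_cancel₀ h2, one_smul]
    rw [h22]
    exact Submodule.smul_mem _ _ hs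
  have hlmin_u := left_min_of_right_min hsp hu.1 hu.2
  have hlmin_v := left_min_of_right_min hsp hv.1 hv.2
  by_cases hC : lA F u ⊓ lA F v = ⊥
  · -- separated on the left
    obtain ⟨g, hgI, hgg, hgunit⟩ :=
      exists_idem_left hsp (Module.finrank F ↥(lA F u ⊔ lA F v)) _
        (isLId_sup (lA_isLId u) (lA_isLId v)) le_rfl
    obtain ⟨g₁, hg₁, g₂, hg₂, hgsum⟩ := Submodule.mem_sup.1 hgI
    have hdec : ∀ y ∈ lA F u, y * g₁ = y := by
      intro y hy
      have h1 : y * g₁ ∈ lA F u := lA_isLId u g₁ hg₁ y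
      have h2' : y * g₂ ∈ lA F v := lA_isLId v g₂ hg₂ y
      have hyg : y * g₁ + y * g₂ = y := by
        rw [← mul_add, hgsum]
        exact hgunit y (Submodule.mem_sup_left hy)
      have : y * g₂ ∈ lA F u ⊓ lA F v := by
        refine ⟨?_, h2'⟩
        have : y * g₂ = y - y * g₁ := eq_sub_of_add_eq' hyg
        rw [this]
        exact sub_mem hy h1
      rw [hC] at this
      have hzero : y * g₂ = 0 := by simpa using this
      rw [hzero, add_zero] at hyg
      exact hyg
    have hdec' : ∀ y ∈ lA F v, y * g₁ = 0 := by
      intro y hy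
      have h1 : y * g₁ ∈ lA F u := lA_isLId u g₁ hg₁ y
      have h2' : y * g₂ ∈ lA F v := lA_isLId v g₂ hg₂ y
      have hyg : y * g₁ + y * g₂ = y := by
        rw [← mul_add, hgsum]
        exact hgunit y (Submodule.mem_sup_right hy)
      have : y * g₁ ∈ lA F u ⊓ lA F v := by
        refine ⟨h1, ?_⟩
        have : y * g₁ = y - y * g₂ := eq_sub_of_add_eq hyg
        rw [this]
        exact sub_mem hy h2'
      rw [hC] at this
      simpa using this
    have hug₁ : u * g₁ = u := hdec u (self_mem_lA u)
    have hvg₁ : v * g₁ = 0 := hdec' v (self_mem_lA v)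
    have hs := hSig u huB v hvB (g₁ * x)
    have e1 : u * (g₁ * x) * v = u * x * v := by
      rw [← mul_assoc, hug₁]
    have e2 : v * (g₁ * x) * u = 0 := by
      rw [← mul_assoc, hvg₁, zero_mul, zero_mul]
    rw [e1, e2, add_zero] at hs
    exact hs
  · -- lA u = lA v
    have hLeq : lA F u = lA F v := by
      obtain ⟨w, hw, hw0⟩ := Submodule.exists_mem_ne_zero_of_ne_bot hC
      have hw1 := (Submodule.mem_inf.1 hw).1
      have hw2 := (Submodule.mem_inf.1 hw).2
      exact le_antisymm ((hlmin_u w hw1 hw0).trans (lA_le_of_mem hw2))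
        ((hlmin_v w hw2 hw0).trans (lA_le_of_mem hw1))
    by_cases hD : rA F u ⊓ rA F v = ⊥
    · -- separated on the right
      obtain ⟨g, hgI, hgg, hgunit⟩ :=
        exists_idem_right hsp (Module.finrank F ↥(rA F u ⊔ rA F v)) _
          (isRId_sup (rA_isRId u) (rA_isRId v)) le_rfl
      obtain ⟨g₁, hg₁, g₂, hg₂, hgsum⟩ := Submodule.mem_sup.1 hgI
      have hdec : ∀ y ∈ rA F u, g₁ * y = y := by
        intro y hy
        have h1 : g₁ * y ∈ rA F u := by
          obtain ⟨c, rfl⟩ := mem_rA.1 hg₁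
          exact mem_rA.2 ⟨c * y, by rw [mul_assoc]⟩
        have h2' : g₂ * y ∈ rA F v := by
          obtain ⟨c, rfl⟩ := mem_rA.1 hg₂
          exact mem_rA.2 ⟨c * y, by rw [mul_assoc]⟩
        have hyg : g₁ * y + g₂ * y = y := by
          rw [← add_mul, hgsum]
          exact hgunit y (Submodule.mem_sup_left hy)
        have : g₂ * y ∈ rA F u ⊓ rA F v := by
          refine ⟨?_, h2'⟩
          have : g₂ * y = y - g₁ * y := eq_sub_of_add_eq' hyg
          rw [this]
          exact sub_mem hy h1
        rw [hD] at this
        have hzero : g₂ * y = 0 := by simpa using this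
        rw [hzero, add_zero] at hyg
        exact hyg
      have hdec' : ∀ y ∈ rA F v, g₁ * y = 0 := by
        intro y hy
        have h1 : g₁ * y ∈ rA F u := by
          obtain ⟨c, rfl⟩ := mem_rA.1 hg₁
          exact mem_rA.2 ⟨c * y, by rw [mul_assoc]⟩
        have h2' : g₂ * y ∈ rA F v := by
          obtain ⟨c, rfl⟩ := mem_rA.1 hg₂
          exact mem_rA.2 ⟨c * y, by rw [mul_assoc]⟩
        have hyg : g₁ * y + g₂ * y = y := by
          rw [← add_mul, hgsum]
          exact hgunit y (Submodule.mem_sup_right hy)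
        have : g₁ * y ∈ rA F u ⊓ rA F v := by
          refine ⟨h1, ?_⟩
          have : g₁ * y = y - g₂ * y := eq_sub_of_add_eq hyg
          rw [this]
          exact sub_mem hy h2'
        rw [hD] at this
        simpa using this
      have hg₁u : g₁ * u = u := hdec u (self_mem_rA u)
      have hg₁v : g₁ * v = 0 := hdec' v (self_mem_rA v)
      have hs1 := hSig u huB v hvB (x * g₁)
      have e1 : u * (x * g₁) * v = 0 := by
        rw [mul_assoc, mul_assoc, hg₁v, mul_zero, mul_zero]
      have e2 : v * (x * g₁) * u = v * x * u := by
        rw [mul_assoc, mul_assoc, hg₁u, ← mul_assoc]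
      rw [e1, e2, zero_add] at hs1
      have hs0 := hSig u huB v hvB x
      have : u * x * v = (u * x * v + v * x * u) - v * x * u := by abel
      rw [this]
      exact sub_mem hs0 hs1
    · -- rA u = rA v as well: v is a scalar multiple of u
      have hReq : rA F u = rA F v := by
        obtain ⟨w, hw, hw0⟩ := Submodule.exists_mem_ne_zero_of_ne_bot hD
        have hw1 := (Submodule.mem_inf.1 hw).1
        have hw2 := (Submodule.mem_inf.1 hw).2
        exact le_antisymm ((hu.2 w hw1 hw0).trans (rA_le_of_mem hw2))
          ((hv.2 w hw2 hw0).trans (rA_le_of_mem hw1))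
      obtain ⟨g, hgmem, hgg, hgunit⟩ :=
        exists_idem_right hsp (Module.finrank F (rA F u)) (rA F u) (rA_isRId u) le_rfl
      obtain ⟨h, hhmem, hhh, hhunit⟩ :=
        exists_idem_left hsp (Module.finrank F (lA F u)) (lA F u) (lA_isLId u) le_rfl
      have hgv : g * v = v := hgunit v (by rw [hReq]; exact self_mem_rA v)
      have hvh : v * h = v := hhunit v (by rw [hLeq]; exact self_mem_lA v)
      obtain ⟨s, hs⟩ := mem_lA.1 hhmem
      obtain ⟨lam, hlam⟩ := corner_scalar hgg hgmem hgunit hu.1 hu.2 (v * s)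
      have hgu : g * u = u := hgunit u (self_mem_rA u)
      have hveq : v = lam • u := by
        calc v = g * v * h := by rw [hgv, hvh]
        _ = g * (v * s) * (g * u) := by rw [← hs, hgu]; simp [mul_assoc]
        _ = (g * (v * s) * g) * u := by simp [mul_assoc]
        _ = (lam • g) * u := by rw [hlam]
        _ = lam • u := by rw [smul_mul_assoc, hgu]
      rw [hveq, mul_smul_comm]
      exact Submodule.smul_mem _ _ (hq u huB x)

lemma derivedSeries_succ_le (k : ℕ) :
    derivedSeries F A (k + 1) ≤ derivedSeries F A k := by
  induction k with
  | zero => exact le_top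
  | succ k ih =>
    show derivedSeries F A (k + 2) ≤ derivedSeries F A (k + 1)
    refine Submodule.span_le.2 ?_
    rintro z ⟨x, hx, y, hy, rfl⟩
    exact Submodule.subset_span ⟨x, ih hx, y, ih hy, rfl⟩

lemma bracket_mem_derivedSeries_succ {k : ℕ} {x y : A}
    (hx : x ∈ derivedSeries F A k) (hy : y ∈ derivedSeries F A k) :
    ⁅x, y⁆ ∈ derivedSeries F A (k + 1) :=
  Submodule.subset_span ⟨x, hx, y, hy, rfl⟩

lemma one_sub_sq {d : A} : (1 - d) * (1 - d) = 1 - d - d + d * d := by noncomm_ring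

/-- Square-zero elements lie in every term of the derived series. -/
lemma sq_zero_mem_derivedSeries [FiniteDimensional F A]
    (h2 : (2 : F) ≠ 0)
    (hsp : ∀ x : A, (∀ a : A, x * a * x = 0) → x = 0) (k : ℕ) :
    ∀ y : A, y * y = 0 → y ∈ derivedSeries F A k := by
  induction k with
  | zero => intro y _; trivial
  | succ k ih =>
    intro y hyy
    by_cases hy0 : y = 0
    · simp [hy0]
    obtain ⟨a₀, ha₀⟩ := exists_vn (F := F) hsp y
    have ha : y * (a₀ * y) = y := by rw [← mul_assoc]; exact ha₀
    have haL : ∀ X : A, y * (a₀ * (y * X)) = y * X := by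
      intro X
      calc y * (a₀ * (y * X)) = (y * (a₀ * y)) * X := by simp [mul_assoc]
      _ = y * X := by rw [ha]
    have hyyL : ∀ X : A, y * (y * X) = 0 := by
      intro X
      calc y * (y * X) = (y * y) * X := by simp [mul_assoc]
      _ = 0 := by rw [hyy, zero_mul]
    set w : A := a₀ * (y * a₀) with hwdef
    have hyw : y * (w * y) = y := by
      rw [hwdef]
      calc y * ((a₀ * (y * a₀)) * y) = y * (a₀ * (y * (a₀ * y))) := by simp [mul_assoc]
      _ = y * (a₀ * y) := by rw [haL]
      _ = y := ha
    have hyw2 : y * w = y * a₀ := by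
      rw [hwdef]
      exact haL a₀
    have hwy2 : w * y = a₀ * y := by
      rw [hwdef]
      calc (a₀ * (y * a₀)) * y = a₀ * (y * (a₀ * y)) := by simp [mul_assoc]
      _ = a₀ * y := by rw [ha]
    have hwp : w * (y * w) = w := by
      rw [hyw2, hwdef]
      calc (a₀ * (y * a₀)) * (y * a₀) = a₀ * (y * (a₀ * (y * a₀))) := by simp [mul_assoc]
      _ = a₀ * (y * a₀) := by rw [haL]
    have hqw : (w * y) * w = w := by
      rw [hwy2, hwdef]
      calc (a₀ * y) * (a₀ * (y * a₀)) = a₀ * (y * (a₀ * (y * a₀))) := by simp [mul_assoc]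
      _ = a₀ * (y * a₀) := by rw [haL]
    set c : A := (y * w) * (w * y) with hcdef
    have hc2 : c = (y * a₀) * (a₀ * y) := by rw [hcdef, hyw2, hwy2]
    have hcc : c * c = 0 := by
      rw [hc2]
      calc ((y * a₀) * (a₀ * y)) * ((y * a₀) * (a₀ * y))
          = y * (a₀ * (a₀ * (y * (y * (a₀ * (a₀ * y)))))) := by simp [mul_assoc]
      _ = 0 := by rw [hyyL]; simp
    have hyc : y * c = 0 := by
      rw [hc2]
      calc y * ((y * a₀) * (a₀ * y)) = y * (y * (a₀ * (a₀ * y))) := by simp [mul_assoc]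
      _ = 0 := hyyL _
    have hcy : c * y = 0 := by
      rw [hc2]
      calc ((y * a₀) * (a₀ * y)) * y = (y * a₀) * (a₀ * (y * y)) := by simp [mul_assoc]
      _ = 0 := by rw [hyy]; simp
    have hwcw : w * (c * w) = w * w := by
      rw [hcdef]
      calc w * (((y * w) * (w * y)) * w) = (w * (y * w)) * ((w * y) * w) := by
            simp [mul_assoc]
      _ = w * w := by rw [hwp, hqw]
    set m : A := 1 - (2 : F)⁻¹ • c with hmdef
    have hmm : m * m = 1 - c := by
      have hdd : ((2 : F)⁻¹ • c) * ((2 : F)⁻¹ • c) = 0 := by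
        rw [smul_mul_assoc, mul_smul_comm, hcc]
        simp
      have hsum : (2 : F)⁻¹ • c + (2 : F)⁻¹ • c = c := by
        rw [← add_smul, ← two_mul, mul_inv_cancel₀ h2, one_smul]
      rw [hmdef, one_sub_sq, hdd, add_zero, sub_sub, hsum]
    have hym : y * m = y := by
      rw [hmdef, mul_sub, mul_one, mul_smul_comm, hyc, smul_zero, sub_zero]
    have hmy : m * y = y := by
      rw [hmdef, sub_mul, one_mul, smul_mul_assoc, hcy, smul_zero, sub_zero]
    set z : A := m * (w * m) with hzdef
    have hz2 : z * z = 0 := by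
      have hcore : w * ((m * m) * w) = 0 := by
        rw [hmm, sub_mul, one_mul, mul_sub, hwcw, sub_self]
      calc z * z = m * ((w * ((m * m) * w)) * m) := by rw [hzdef]; simp [mul_assoc]
      _ = 0 := by rw [hcore]; simp
    have hyzy : y * (z * y) = y := by
      calc y * (z * y) = (y * m) * (w * (m * y)) := by rw [hzdef]; simp [mul_assoc]
      _ = y * (w * y) := by rw [hym, hmy]
      _ = y := hyw
    -- now conclude
    have hzk : z ∈ derivedSeries F A k := ih z hz2
    have hyk : y ∈ derivedSeries F A k := ih y hyy
    have hbr : ⁅y, z⁆ ∈ derivedSeries F A k :=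
      derivedSeries_succ_le k (bracket_mem_derivedSeries_succ hyk hzk)
    have hbr2 : ⁅⁅y, z⁆, y⁆ ∈ derivedSeries F A (k + 1) :=
      bracket_mem_derivedSeries_succ hbr hyk
    have hform : ⁅⁅y, z⁆, y⁆ = y * (z * y) + y * (z * y) := by
      rw [Ring.lie_def, Ring.lie_def, sub_mul, mul_sub]
      have e1 : (z * y) * y = 0 := by rw [mul_assoc, hyy, mul_zero]
      have e2 : y * (y * z) = 0 := hyyL z
      have e3 : (y * z) * y = y * (z * y) := mul_assoc _ _ _
      rw [e1, e2, e3]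
      abel
    have hfin : y = (2 : F)⁻¹ • ⁅⁅y, z⁆, y⁆ := by
      rw [hform, hyzy, ← two_smul F y, smul_smul, inv_mul_cancel₀ h2, one_smul]
    rw [hfin]
    exact Submodule.smul_mem _ _ hbr2

/-- Every element of `B` is a sum of rank-one elements of `B`. -/
lemma mem_span_rankones [FiniteDimensional F A]
    (hsp : ∀ x : A, (∀ a : A, x * a * x = 0) → x = 0)
    {B : Submodule F A} (hq : ∀ b ∈ B, ∀ z : A, b * z * b ∈ B) :
    ∀ (n : ℕ) (b : A), b ∈ B → Module.finrank F (rA F b) ≤ n →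
      b ∈ Submodule.span F {u : A | u ∈ B ∧ RankOne F u} := by
  intro n
  induction n with
  | zero =>
    intro b hbB hrk
    have : rA F b = ⊥ := Submodule.finrank_eq_zero.1 (Nat.le_zero.1 hrk)
    have hb0 : b = 0 := rA_eq_bot_iff.1 this
    rw [hb0]
    exact Submodule.zero_mem _
  | succ n ih =>
    intro b hbB hrk
    by_cases hb0 : b = 0
    · rw [hb0]; exact Submodule.zero_mem _
    obtain ⟨v, hvR, hvS⟩ := exists_rankone (F := F) hsp hb0
    obtain ⟨c₀, hc₀⟩ := mem_sandw.1 hvS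
    have hsandB : ∀ w ∈ sandw F b, w ∈ B := by
      intro w hw
      obtain ⟨c, rfl⟩ := mem_sandw.1 hw
      exact hq b hbB c
    have hvB : v ∈ B := hsandB v hvS
    obtain ⟨a₀, ha₀⟩ := exists_vn (F := F) hsp v
    -- u := (v * a₀) * b
    set u : A := v * a₀ * b with hudef
    have hppb : (v * a₀) * (v * a₀) = v * a₀ := by
      calc (v * a₀) * (v * a₀) = (v * a₀ * v) * a₀ := by simp [mul_assoc]
      _ = v * a₀ := by rw [ha₀]
    have huS : u ∈ sandw F b := by
      rw [hudef, ← hc₀]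
      exact mem_sandw.2 ⟨c₀ * (b * a₀), by simp [mul_assoc]⟩
    have huB : u ∈ B := hsandB u huS
    have huv : u * (c₀ * b) = v := by
      calc u * (c₀ * b) = v * a₀ * (b * c₀ * b) := by rw [hudef]; simp [mul_assoc]
      _ = v * a₀ * v := by rw [hc₀]
      _ = v := ha₀
    have hu0 : u ≠ 0 := by
      intro h
      rw [h, zero_mul] at huv
      exact hvR.1 huv.symm
    have hurAv : u ∈ rA F v := mem_rA.2 ⟨a₀ * b, by rw [hudef, mul_assoc]⟩
    have huR : RankOne F u := by
      refine ⟨hu0, ?_⟩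
      intro t ht ht0
      have h1 : rA F u ≤ rA F v := rA_le_of_mem hurAv
      have h2 : rA F v ≤ rA F t := hvR.2 t (h1 ht) ht0
      exact h1.trans h2
    have hbuB : b - u ∈ B := sub_mem hbB huB
    -- rank drop
    have hle : rA F (b - u) ≤ rA F b := by
      intro z hz
      obtain ⟨s, rfl⟩ := mem_rA.1 hz
      have h1 : b * s ∈ rA F b := mem_rA.2 ⟨s, rfl⟩
      have h2 : u * s ∈ rA F b := by
        refine mem_rA.2 ⟨c₀ * (b * (a₀ * (b * s))), ?_⟩
        rw [hudef, ← hc₀]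
        simp [mul_assoc]
      have : (b - u) * s = b * s - u * s := by rw [sub_mul]
      rw [this]
      exact sub_mem h1 h2
    have hvnotin : v ∉ rA F (b - u) := by
      intro hmem
      obtain ⟨s, hs⟩ := mem_rA.1 hmem
      have hpu : (v * a₀) * u = u := by
        calc (v * a₀) * u = ((v * a₀) * (v * a₀)) * b := by rw [hudef]; simp [mul_assoc]
        _ = u := by rw [hppb, hudef]
      have hpbu : (v * a₀) * (b - u) = 0 := by
        rw [mul_sub, hpu]
        rw [show (v * a₀) * b = u from hudef.symm]
        exact sub_self u
      have hpv : (v * a₀) * v = v := ha₀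
      have : v = 0 := by
        calc v = (v * a₀) * v := hpv.symm
        _ = (v * a₀) * ((b - u) * s) := by rw [hs]
        _ = ((v * a₀) * (b - u)) * s := by rw [← mul_assoc]
        _ = 0 := by rw [hpbu, zero_mul]
      exact hvR.1 this
    have hvin : v ∈ rA F b := by
      rw [← hc₀]
      exact mem_rA.2 ⟨c₀ * b, by simp [mul_assoc]⟩
    have hlt : rA F (b - u) < rA F b := lt_of_le_of_ne hle (by
      intro hEq
      exact hvnotin (hEq ▸ hvin))
    have hrk' : Module.finrank F (rA F (b - u)) ≤ n := by
      have := Submodule.finrank_lt_finrank_of_lt hlt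
      omega
    have hrest := ih (b - u) hbuB hrk'
    have : b = u + (b - u) := by abel
    rw [this]
    exact Submodule.add_mem _ (Submodule.subset_span ⟨huB, huR⟩) hrest

/-- **Lemma.** Suppose `A` is finite-dimensional semisimple over an algebraically
closed field of characteristic `p ≠ 2,3` and `k ≥ 0`.  Then every Jordan-Lie inner
ideal of `A⁽ᵏ⁾` is regular, i.e. `BAB ⊆ B`. -/
theorem jordanLie_is_regular (F A : Type*) [Field F] [IsAlgClosed F] (p : ℕ)
    [CharP F p] (hp2 : p ≠ 2) (hp3 : p ≠ 3) [Ring A] [Algebra F A]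
    [FiniteDimensional F A]
    (hss : Ideal.jacobson (⊥ : Ideal A) = ⊥) (k : ℕ) (B : Submodule F A)
    (hJLie : IsJordanLie (derivedSeries F A k) B) :
    ∀ b ∈ B, ∀ x : A, ∀ b' ∈ B, b * x * b' ∈ B := by
  obtain ⟨⟨hBL, hInner⟩, hB2⟩ := hJLie
  have h2 : (2 : F) ≠ 0 := by
    intro h
    have hdvd : p ∣ 2 := (CharP.cast_eq_zero_iff F p 2).1 h
    rcases (Nat.dvd_prime Nat.prime_two).1 hdvd with h1 | h1
    · exact CharP.char_ne_one F p h1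
    · exact hp2 h1
  have hsp : ∀ x : A, (∀ a : A, x * a * x = 0) → x = 0 := semiprime_of_jacobson hss
  -- the idempotents e (for BA) and f (for AB)
  set RB : Submodule F A := Submodule.span F {z | ∃ b ∈ B, ∃ a : A, z = b * a} with hRBdef
  have hRBr : IsRId RB := by
    intro x hx a
    induction hx using Submodule.span_induction with
    | mem w hw =>
      obtain ⟨b, hb, a', rfl⟩ := hw
      exact Submodule.subset_span ⟨b, hb, a' * a, by rw [mul_assoc]⟩
    | zero => rw [zero_mul]; exact Submodule.zero_mem _
    | add y z hy hz ihy ihz => rw [add_mul]; exact Submodule.add_mem _ ihy ihz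
    | smul r y hy ihy => rw [smul_mul_assoc]; exact Submodule.smul_mem _ _ ihy
  have hBsubRB : ∀ b ∈ B, b ∈ RB :=
    fun b hb => Submodule.subset_span ⟨b, hb, 1, (mul_one b).symm⟩
  have hBRB : ∀ b ∈ B, ∀ w ∈ RB, b * w = 0 := by
    intro b hb w hw
    induction hw using Submodule.span_induction with
    | mem w hw =>
      obtain ⟨b', hb', a', rfl⟩ := hw
      rw [← mul_assoc, hB2 b hb b' hb', zero_mul]
    | zero => rw [mul_zero]
    | add y z hy hz ihy ihz => rw [mul_add, ihy, ihz, add_zero]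
    | smul r y hy ihy => rw [mul_smul_comm, ihy, smul_zero]
  obtain ⟨e, heRB, hee, heunit⟩ :=
    exists_idem_right (F := F) hsp (Module.finrank F RB) RB hRBr le_rfl
  have heb : ∀ b ∈ B, e * b = b := fun b hb => heunit b (hBsubRB b hb)
  have hbe : ∀ b ∈ B, b * e = 0 := fun b hb => hBRB b hb e heRB
  set LB : Submodule F A := Submodule.span F {z | ∃ b ∈ B, ∃ a : A, z = a * b} with hLBdef
  have hLBl : IsLId LB := by
    intro x hx a
    induction hx using Submodule.span_induction with
    | mem w hw =>
      obtain ⟨b, hb, a', rfl⟩ := hw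
      exact Submodule.subset_span ⟨b, hb, a * a', by rw [mul_assoc]⟩
    | zero => rw [mul_zero]; exact Submodule.zero_mem _
    | add y z hy hz ihy ihz => rw [mul_add]; exact Submodule.add_mem _ ihy ihz
    | smul r y hy ihy => rw [mul_smul_comm]; exact Submodule.smul_mem _ _ ihy
  have hBsubLB : ∀ b ∈ B, b ∈ LB :=
    fun b hb => Submodule.subset_span ⟨b, hb, 1, (one_mul b).symm⟩
  have hLBB : ∀ w ∈ LB, ∀ b ∈ B, w * b = 0 := by
    intro w hw
    induction hw using Submodule.span_induction with
    | mem w hw =>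
      intro b hb
      obtain ⟨b', hb', a', rfl⟩ := hw
      rw [mul_assoc, hB2 b' hb' b hb, mul_zero]
    | zero => intro b hb; rw [zero_mul]
    | add y z hy hz ihy ihz => intro b hb; rw [add_mul, ihy b hb, ihz b hb, add_zero]
    | smul r y hy ihy => intro b hb; rw [smul_mul_assoc, ihy b hb, smul_zero]
  obtain ⟨f₀, hf₀LB, hf₀f₀, hf₀unit⟩ :=
    exists_idem_left (F := F) hsp (Module.finrank F LB) LB hLBl le_rfl
  have hbf₀ : ∀ b ∈ B, b * f₀ = b := fun b hb => hf₀unit b (hBsubLB b hb)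
  have hf₀RB : ∀ w ∈ RB, f₀ * w = 0 := by
    intro w hw
    induction hw using Submodule.span_induction with
    | mem w hw =>
      obtain ⟨b, hb, a', rfl⟩ := hw
      rw [← mul_assoc, hLBB f₀ hf₀LB b hb, zero_mul]
    | zero => rw [mul_zero]
    | add y z hy hz ihy ihz => rw [mul_add, ihy, ihz, add_zero]
    | smul r y hy ihy => rw [mul_smul_comm, ihy, smul_zero]
  set f : A := f₀ - e * f₀ with hfdef
  have hef : e * f = 0 := by
    rw [hfdef, mul_sub, ← mul_assoc, hee, sub_self]
  have hbf : ∀ b ∈ B, b * f = b := by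
    intro b hb
    rw [hfdef, mul_sub, hbf₀ b hb, ← mul_assoc, hbe b hb, zero_mul, sub_zero]
  -- sigma closure for arbitrary x
  have hSig : ∀ b ∈ B, ∀ b' ∈ B, ∀ x : A, b * x * b' + b' * x * b ∈ B := by
    intro b hb b' hb' x
    obtain ⟨y, hydef⟩ : ∃ y : A, y = f * x * e := ⟨_, rfl⟩
    have hyy : y * y = 0 := by
      calc y * y = (f * x) * ((e * f) * (x * e)) := by rw [hydef]; simp [mul_assoc]
      _ = 0 := by rw [hef, zero_mul, mul_zero]
    have hyD : y ∈ derivedSeries F A k := sq_zero_mem_derivedSeries h2 hsp k y hyy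
    have hIn := hInner b hb b' hb' y hyD
    have hbb' := hB2 b hb b' hb'
    have hb'b := hB2 b' hb' b hb
    have hbrac : ⁅b, ⁅b', y⁆⁆ = -(b * y * b' + b' * y * b) := by
      rw [Ring.lie_def, Ring.lie_def, mul_sub, sub_mul]
      have e1 : b * (b' * y) = 0 := by rw [← mul_assoc, hbb', zero_mul]
      have e2 : (y * b') * b = 0 := by rw [mul_assoc, hb'b, mul_zero]
      have e3 : b * (y * b') = b * y * b' := by rw [mul_assoc]
      rw [e1, e2, e3]
      abel
    have hmem : b * y * b' + b' * y * b ∈ B := by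
      rw [hbrac] at hIn
      exact (Submodule.neg_mem_iff B).1 hIn
    have hby : b * y * b' = b * x * b' := by
      have h : b * y * b' = (b * f) * (x * (e * b')) := by rw [hydef]; simp [mul_assoc]
      rw [h, hbf b hb, heb b' hb', ← mul_assoc]
    have hb'y : b' * y * b = b' * x * b := by
      have h : b' * y * b = (b' * f) * (x * (e * b)) := by rw [hydef]; simp [mul_assoc]
      rw [h, hbf b' hb', heb b hb, ← mul_assoc]
    rw [← hby, ← hb'y]
    exact hmem
  have hq : ∀ b ∈ B, ∀ z : A, b * z * b ∈ B := by
    intro b hb z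
    have hs := hSig b hb b hb z
    have h22 : b * z * b = (2 : F)⁻¹ • (b * z * b + b * z * b) := by
      rw [← two_smul F, smul_smul, inv_mul_cancel₀ h2, one_smul]
    rw [h22]
    exact Submodule.smul_mem _ _ hs
  -- final bilinear reduction to rank-one elements
  intro b hb x b' hb'
  have hspan : ∀ c ∈ B, c ∈ Submodule.span F {u : A | u ∈ B ∧ RankOne F u} :=
    fun c hc => mem_span_rankones hsp hq (Module.finrank F (rA F c)) c hc le_rfl
  have hcore : ∀ u, (u ∈ B ∧ RankOne F u) → ∀ w, (w ∈ B ∧ RankOne F w) → u * x * w ∈ B :=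
    fun u hu w hw => rankone_sandwich hsp h2 hSig hu.2 hw.2 hu.1 hw.1 x
  have step1 : ∀ u, (u ∈ B ∧ RankOne F u) →
      ∀ w ∈ Submodule.span F {u : A | u ∈ B ∧ RankOne F u}, u * x * w ∈ B := by
    intro u hu w hw
    induction hw using Submodule.span_induction with
    | mem w hwS => exact hcore u hu w hwS
    | zero => rw [mul_zero]; exact Submodule.zero_mem _
    | add y z hy hz ihy ihz => rw [mul_add]; exact Submodule.add_mem _ ihy ihz
    | smul r y hy ihy => rw [mul_smul_comm]; exact Submodule.smul_mem _ _ ihy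
  have step2 : ∀ v ∈ Submodule.span F {u : A | u ∈ B ∧ RankOne F u},
      ∀ w ∈ Submodule.span F {u : A | u ∈ B ∧ RankOne F u}, v * x * w ∈ B := by
    intro v hv
    induction hv using Submodule.span_induction with
    | mem v hvS => intro w hw; exact step1 v hvS w hw
    | zero => intro w hw; rw [zero_mul, zero_mul]; exact Submodule.zero_mem _
    | add y z hy hz ihy ihz =>
      intro w hw
      rw [add_mul, add_mul]
      exact Submodule.add_mem _ (ihy w hw) (ihz w hw)
    | smul r y hy ihy =>
      intro w hw
      rw [smul_mul_assoc, smul_mul_assoc]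
      exact Submodule.smul_mem _ _ (ihy w hw)
  exact step2 b (hspan b hb) b' (hspan b' hb')

end Paper
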